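/- Let p ∈ (1,2) and let ξ₁, ξ₂ : [0,1) → [0,∞) be continuously differentiable functions such that ξ₁(0) ≤ ξ₂(0) and ξ₁'(y) + (p/(p-1)) ξ₁(y)^{(p-1)/p} ≤ ξ₂'(y) + (p/(p-1)) ξ₂(y)^{(p-1)/p} for all y ∈ (0,1). Then ξ₁(y) ≤ ξ₂(y) for all y ∈ [0,1). -/
import Mathlib


open Set Filter Topology

/-- **Comparison principle.** If `ξ₁, ξ₂ : [0,1) → [0,∞)` are continuously
differentiable (with derivatives `d₁, d₂`), `ξ₁(0) ≤ ξ₂(0)` and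
`d₁ + (p/(p-1)) ξ₁^{(p-1)/p} ≤ d₂ + (p/(p-1)) ξ₂^{(p-1)/p}` on `(0,1)`, then `ξ₁ ≤ ξ₂`
on `[0,1)`. -/
theorem stmt3 (p : ℝ) (hp : p ∈ Set.Ioo (1:ℝ) 2)
    (ξ₁ ξ₂ d₁ d₂ : ℝ → ℝ)
    (hd₁ : ∀ y ∈ Set.Ico (0:ℝ) 1, HasDerivWithinAt ξ₁ (d₁ y) (Set.Ico 0 1) y)
    (hd₂ : ∀ y ∈ Set.Ico (0:ℝ) 1, HasDerivWithinAt ξ₂ (d₂ y) (Set.Ico 0 1) y)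
    (hc₁ : ContinuousOn d₁ (Set.Ico 0 1))
    (hc₂ : ContinuousOn d₂ (Set.Ico 0 1))
    (hnn₁ : ∀ y ∈ Set.Ico (0:ℝ) 1, 0 ≤ ξ₁ y)
    (hnn₂ : ∀ y ∈ Set.Ico (0:ℝ) 1, 0 ≤ ξ₂ y)
    (h0 : ξ₁ 0 ≤ ξ₂ 0)
    (hineq : ∀ y ∈ Set.Ioo (0:ℝ) 1,
      d₁ y + (p/(p-1)) * ξ₁ y ^ ((p-1)/p) ≤ d₂ y + (p/(p-1)) * ξ₂ y ^ ((p-1)/p)) :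
    ∀ y ∈ Set.Ico (0:ℝ) 1, ξ₁ y ≤ ξ₂ y := by
  obtain ⟨hp1, hp2⟩ := hp
  have hα : (0:ℝ) ≤ (p-1)/p := div_nonneg (by linarith) (by linarith)
  have hcpos : (0:ℝ) ≤ p/(p-1) := div_nonneg (by linarith) (by linarith)
  -- h := ξ₁ - ξ₂ is continuous on Ico 0 1
  have hcont : ContinuousOn (fun s => ξ₁ s - ξ₂ s) (Set.Ico 0 1) :=
    fun s hs => ((hd₁ s hs).continuousWithinAt).sub ((hd₂ s hs).continuousWithinAt)
  intro y hy
  by_contra hlt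
  push_neg at hlt
  -- the crossing set
  set S : Set ℝ := Set.Icc 0 y ∩ (fun s => ξ₁ s - ξ₂ s) ⁻¹' Set.Iic 0 with hS
  have hyIcc : Set.Icc (0:ℝ) y ⊆ Set.Ico (0:ℝ) 1 :=
    fun s hs => ⟨hs.1, lt_of_le_of_lt hs.2 hy.2⟩
  have hSclosed : IsClosed S :=
    (hcont.mono hyIcc).preimage_isClosed_of_isClosed isClosed_Icc isClosed_Iic
  have hSne : S.Nonempty := ⟨0, ⟨le_refl 0, hy.1⟩, by simpa using h0⟩
  have hSbdd : BddAbove S := ⟨y, fun s hs => hs.1.2⟩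
  set t := sSup S with ht
  have htS : t ∈ S := hSclosed.csSup_mem hSne hSbdd
  have hty : t ≤ y := htS.1.2
  have ht0 : 0 ≤ t := htS.1.1
  have htlt : t < y := by
    rcases lt_or_eq_of_le hty with h | h
    · exact h
    · exfalso; have := htS.2; rw [h] at this; simp at this; linarith
  -- on (t, y], ξ₂ < ξ₁
  have hgt : ∀ s ∈ Set.Ioc t y, ξ₂ s < ξ₁ s := by
    intro s hs
    by_contra hle
    push_neg at hle
    have hsS : s ∈ S := ⟨⟨le_trans ht0 hs.1.le, hs.2⟩, by simp; linarith⟩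
    exact absurd (le_csSup hSbdd hsS) (not_le.mpr hs.1)
  -- derivative of h on (t,y) is nonpositive
  have hanti : AntitoneOn (fun s => ξ₁ s - ξ₂ s) (Set.Icc t y) := by
    have hIoo : Set.Ioo t y ⊆ Set.Ioo (0:ℝ) 1 :=
      fun s hs => ⟨lt_of_le_of_lt ht0 hs.1, lt_trans hs.2 hy.2⟩
    have hD : ∀ s ∈ Set.Ioo t y,
        HasDerivAt (fun s => ξ₁ s - ξ₂ s) (d₁ s - d₂ s) s := by
      intro s hs
      have hs01 := hIoo hs
      have hmem : Set.Ico (0:ℝ) 1 ∈ 𝓝 s := Ico_mem_nhds hs01.1 hs01.2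
      exact ((hd₁ s ⟨hs01.1.le, hs01.2⟩).hasDerivAt hmem).sub
        ((hd₂ s ⟨hs01.1.le, hs01.2⟩).hasDerivAt hmem)
    apply antitoneOn_of_deriv_nonpos (convex_Icc t y)
      (hcont.mono (fun s hs => hyIcc ⟨le_trans ht0 hs.1, hs.2⟩))
    · intro s hs
      rw [interior_Icc] at hs
      exact (hD s hs).differentiableAt.differentiableWithinAt
    · intro s hs
      rw [interior_Icc] at hs
      rw [(hD s hs).deriv]
      have hs01 := hIoo hs
      have h1 := hineq s hs01
      have h2 : ξ₂ s ^ ((p-1)/p) ≤ ξ₁ s ^ ((p-1)/p) :=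
        Real.rpow_le_rpow (hnn₂ s ⟨hs01.1.le, hs01.2⟩)
          (hgt s ⟨hs.1, hs.2.le⟩).le hα
      nlinarith [mul_le_mul_of_nonneg_left h2 hcpos]
  have := hanti ⟨le_refl t, hty⟩ ⟨hty, le_refl y⟩ hty
  have htle : ξ₁ t - ξ₂ t ≤ 0 := htS.2
  simp only at this
  linarith
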